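/- For $h\in(0,1/2]$ and $q\in(0,1]$ let $c_k(h,q)=\sqrt{1-\exp\big(-\tfrac{2h^2}{1-h}(qk^2+\tfrac{1}{q})\big)}\,\exp\big(-hqk^2-\tfrac{h}{q}\big)$ for $k\in\mathbb{Z}$. Then for every $\varepsilon\in(0,\pi^2)$ there exist constants $K>0$ and $\delta>0$ such that for all $h\in(0,1/2]$, $q\in(0,1]$ with $hq<\delta$: $\Big|\sum_{k\in\mathbb{Z}}c_k(h,q)^2 - e^{-2h/q}\sqrt{\tfrac{\pi}{2hq}} + e^{-2h/(q(1-h))}\sqrt{\tfrac{\pi(1-h)}{2hq}}\Big| \le K\Big(\exp\big(-\tfrac{2h}{q}-\tfrac{\pi^2-\varepsilon}{2hq}\big)+\exp\big(-\tfrac{2h}{(1-h)q}-\tfrac{(\pi^2-\varepsilon)(1-h)}{2hq}\big)\Big)$. -/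

import Mathlib

open Filter

noncomputable section

/-- The coefficients `c_k(h,q) = √(1-exp(-(2h²/(1-h))(qk²+1/q)))·exp(-hqk²-h/q)`. -/
def ck (h q : ℝ) (k : ℤ) : ℝ :=
  Real.sqrt (1 - Real.exp (-(2 * h ^ 2 / (1 - h) * (q * (k:ℝ) ^ 2 + 1 / q)))) *
    Real.exp (-(h * q * (k:ℝ) ^ 2) - h / q)


lemma summable_gauss {a : ℝ} (ha : 0 < a) : Summable fun k : ℤ => Real.exp (-a * (k:ℝ) ^ 2) := by
  have geo : Summable fun n : ℕ => Real.exp (-a) ^ n :=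
    summable_geometric_of_lt_one (Real.exp_pos _).le (Real.exp_lt_one_iff.2 (by linarith))
  have key : ∀ n : ℕ, Real.exp (-a * (n:ℝ) ^ 2) ≤ Real.exp (-a) ^ n := by
    intro n
    rw [← Real.exp_nat_mul]
    apply Real.exp_le_exp.2
    have hn : (n:ℝ) ≤ (n:ℝ) ^ 2 := by exact_mod_cast Nat.le_self_pow two_ne_zero n
    nlinarith
  apply Summable.of_nat_of_neg
  · exact Summable.of_nonneg_of_le (fun n => (Real.exp_pos _).le) (fun n => by exact_mod_cast key n) geo
  · exact Summable.of_nonneg_of_le (fun n => (Real.exp_pos _).le)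
      (fun n => by push_cast; rw [neg_sq]; exact_mod_cast key n) geo

lemma theta_ge_one {a : ℝ} (ha : 0 < a) : 1 ≤ ∑' k : ℤ, Real.exp (-a * (k:ℝ) ^ 2) := by
  have := Summable.le_tsum (summable_gauss ha) 0 (fun k _ => (Real.exp_pos _).le)
  simpa using this

lemma poisson {u : ℝ} (hu : 0 < u) :
    (∑' k : ℤ, Real.exp (-u * (k:ℝ) ^ 2)) =
      Real.sqrt (Real.pi / u) * ∑' k : ℤ, Real.exp (-(Real.pi ^ 2 / u) * (k:ℝ) ^ 2) := by
  have h1 := Real.tsum_exp_neg_mul_int_sq (a := u / Real.pi) (div_pos hu Real.pi_pos)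
  have e1 : ∀ k : ℤ, -Real.pi * (u / Real.pi) * (k:ℝ) ^ 2 = -u * (k:ℝ) ^ 2 := by
    intro k; field_simp
  have e2 : ∀ k : ℤ, -Real.pi / (u / Real.pi) * (k:ℝ) ^ 2 = -(Real.pi ^ 2 / u) * (k:ℝ) ^ 2 := by
    intro k; rw [neg_div, div_div_eq_mul_div, ← sq]
  simp_rw [e1, e2] at h1
  rw [h1]
  congr 1
  rw [← Real.sqrt_eq_rpow, one_div, ← Real.sqrt_inv, inv_div]

lemma tail_bound (ε : ℝ) (hε : 0 < ε) : ∃ K > 0, ∀ s : ℝ, 0 < s → s ≤ 1 →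
    Real.sqrt (Real.pi / s) * ((∑' k : ℤ, Real.exp (-(Real.pi ^ 2 / s) * (k:ℝ) ^ 2)) - 1) ≤
      K * Real.exp (-((Real.pi ^ 2 - ε) / s)) := by
  set C : ℝ := Real.exp 1 * ∑' k : ℤ, Real.exp (-(1:ℝ) * (k:ℝ) ^ 2) with hCdef
  have hC1 : 1 ≤ ∑' k : ℤ, Real.exp (-(1:ℝ) * (k:ℝ) ^ 2) := theta_ge_one one_pos
  have hCpos : 0 < C := by
    have := Real.exp_pos 1; nlinarith
  refine ⟨C * (Real.sqrt Real.pi / ε), by positivity, fun s hs hs1 => ?_⟩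
  have hb : 0 < Real.pi ^ 2 / s := by positivity
  have hbge : 1 ≤ Real.pi ^ 2 / s := by
    rw [le_div_iff₀ hs]
    nlinarith [Real.pi_gt_three]
  -- step: theta - 1 ≤ C * exp(-b)
  have hsum := summable_gauss hb
  have step := Summable.tsum_eq_add_tsum_ite hsum 0
  have hterm : ∀ k : ℤ, (if k = 0 then 0 else Real.exp (-(Real.pi ^ 2 / s) * (k:ℝ) ^ 2)) ≤
      (Real.exp 1 * Real.exp (-(Real.pi ^ 2 / s))) * Real.exp (-(1:ℝ) * (k:ℝ) ^ 2) := by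
    intro k
    split
    · positivity
    · next hk =>
      have hk2 : (1:ℝ) ≤ (k:ℝ) ^ 2 := by
        have h0 : (0:ℤ) < k ^ 2 := by positivity
        have : (1:ℤ) ≤ k ^ 2 := h0
        exact_mod_cast this
      rw [← Real.exp_add, ← Real.exp_add]
      apply Real.exp_le_exp.2
      nlinarith
  have hsumg : Summable fun k : ℤ =>
      (Real.exp 1 * Real.exp (-(Real.pi ^ 2 / s))) * Real.exp (-(1:ℝ) * (k:ℝ) ^ 2) :=
    (summable_gauss one_pos).mul_left _
  have hsumf : Summable fun k : ℤ =>
      (if k = 0 then 0 else Real.exp (-(Real.pi ^ 2 / s) * (k:ℝ) ^ 2)) :=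
    Summable.of_nonneg_of_le (fun k => by split <;> positivity) hterm hsumg
  have hT : (∑' k : ℤ, Real.exp (-(Real.pi ^ 2 / s) * (k:ℝ) ^ 2)) - 1 ≤
      C * Real.exp (-(Real.pi ^ 2 / s)) := by
    have h2 : (∑' k : ℤ, Real.exp (-(Real.pi ^ 2 / s) * (k:ℝ) ^ 2)) - 1 =
        ∑' k : ℤ, (if k = 0 then 0 else Real.exp (-(Real.pi ^ 2 / s) * (k:ℝ) ^ 2)) := by
      rw [step]; simp
    rw [h2]
    calc _ ≤ ∑' k : ℤ, (Real.exp 1 * Real.exp (-(Real.pi ^ 2 / s))) * Real.exp (-(1:ℝ) * (k:ℝ) ^ 2) :=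
          Summable.tsum_le_tsum hterm hsumf hsumg
      _ = C * Real.exp (-(Real.pi ^ 2 / s)) := by rw [tsum_mul_left, hCdef]; ring
  -- the exponential split
  have e1 : Real.exp (-(Real.pi ^ 2 / s)) =
      Real.exp (-(ε / s)) * Real.exp (-((Real.pi ^ 2 - ε) / s)) := by
    rw [← Real.exp_add]
    congr 1
    field_simp
    ring
  have h2 : Real.sqrt (Real.pi / s) * Real.exp (-(ε / s)) ≤ Real.sqrt Real.pi / ε := by
    have hsd : Real.sqrt (Real.pi / s) = Real.sqrt Real.pi / Real.sqrt s :=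
      Real.sqrt_div Real.pi_pos.le s
    have hexp : Real.exp (-(ε / s)) ≤ s / ε := by
      rw [Real.exp_neg]
      have hpos : 0 < ε / s := div_pos hε hs
      have h3 : ε / s ≤ Real.exp (ε / s) := by
        have := Real.add_one_le_exp (ε / s); linarith
      calc (Real.exp (ε / s))⁻¹ ≤ (ε / s)⁻¹ := by gcongr
        _ = s / ε := by rw [inv_div]
    calc Real.sqrt (Real.pi / s) * Real.exp (-(ε / s))
        ≤ (Real.sqrt Real.pi / Real.sqrt s) * (s / ε) := by
          rw [hsd]
          exact mul_le_mul_of_nonneg_left hexp (by positivity)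
      _ = (Real.sqrt Real.pi / ε) * (s / Real.sqrt s) := by ring
      _ = (Real.sqrt Real.pi / ε) * Real.sqrt s := by rw [Real.div_sqrt]
      _ ≤ (Real.sqrt Real.pi / ε) * 1 :=
          mul_le_mul_of_nonneg_left (Real.sqrt_le_one.mpr hs1) (by positivity)
      _ = Real.sqrt Real.pi / ε := mul_one _
  calc Real.sqrt (Real.pi / s) * ((∑' k : ℤ, Real.exp (-(Real.pi ^ 2 / s) * (k:ℝ) ^ 2)) - 1)
      ≤ Real.sqrt (Real.pi / s) * (C * Real.exp (-(Real.pi ^ 2 / s))) :=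
        mul_le_mul_of_nonneg_left hT (Real.sqrt_nonneg _)
    _ = C * (Real.sqrt (Real.pi / s) * Real.exp (-(ε / s))) * Real.exp (-((Real.pi ^ 2 - ε) / s)) := by
        rw [e1]; ring
    _ ≤ C * (Real.sqrt Real.pi / ε) * Real.exp (-((Real.pi ^ 2 - ε) / s)) := by
        apply mul_le_mul_of_nonneg_right _ (Real.exp_pos _).le
        exact mul_le_mul_of_nonneg_left h2 hCpos.le

/-- Asymptotics for `∑ₖ c_k(h,q)²` (the squared norm `‖η_j^{a,0}‖²`) as `hq → 0`. -/
theorem norm_sq_asymptotics (ε : ℝ) (hε : ε ∈ Set.Ioo 0 (Real.pi ^ 2)) :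
    ∃ K > 0, ∃ δ > 0, ∀ h ∈ Set.Ioc (0:ℝ) (1/2), ∀ q ∈ Set.Ioc (0:ℝ) 1, h * q < δ →
      |(∑' k : ℤ, ck h q k ^ 2) -
          Real.exp (-(2 * h / q)) * Real.sqrt (Real.pi / (2 * h * q)) +
          Real.exp (-(2 * h / (q * (1 - h)))) * Real.sqrt (Real.pi * (1 - h) / (2 * h * q))| ≤
        K * (Real.exp (-(2 * h / q) - (Real.pi ^ 2 - ε) / (2 * h * q)) +
          Real.exp (-(2 * h / ((1 - h) * q)) - (Real.pi ^ 2 - ε) * (1 - h) / (2 * h * q))) := by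
  obtain ⟨K, hK, hKb⟩ := tail_bound ε hε.1
  refine ⟨K, hK, 1/4, by norm_num, fun h hh q hq hδ => ?_⟩
  obtain ⟨hh0, hh1⟩ := hh
  obtain ⟨hq0, hq1⟩ := hq
  have h1h : (0:ℝ) < 1 - h := by linarith
  have hne : (1:ℝ) - h ≠ 0 := ne_of_gt h1h
  have hqne : q ≠ 0 := ne_of_gt hq0
  set t : ℝ := 2 * h * q with ht_def
  set t' : ℝ := 2 * h * q / (1 - h) with ht'_def
  have ht : 0 < t := by positivity
  have ht' : 0 < t' := by positivity
  have ht1 : t ≤ 1 := by rw [ht_def]; nlinarith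
  have ht'1 : t' ≤ 1 := by
    rw [ht'_def, div_le_one h1h]; nlinarith
  set A : ℝ := Real.exp (-(2 * h / q)) with hA_def
  set B : ℝ := Real.exp (-(2 * h / (q * (1 - h)))) with hB_def
  -- pointwise identity
  have hck : ∀ k : ℤ, ck h q k ^ 2 =
      A * Real.exp (-t * (k:ℝ) ^ 2) - B * Real.exp (-t' * (k:ℝ) ^ 2) := by
    intro k
    have hargle : -(2 * h ^ 2 / (1 - h) * (q * (k:ℝ) ^ 2 + 1 / q)) ≤ 0 := by
      have : 0 ≤ 2 * h ^ 2 / (1 - h) * (q * (k:ℝ) ^ 2 + 1 / q) := by positivity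
      linarith
    have hnn : 0 ≤ 1 - Real.exp (-(2 * h ^ 2 / (1 - h) * (q * (k:ℝ) ^ 2 + 1 / q))) := by
      have := Real.exp_le_one_iff.mpr hargle
      linarith
    rw [ck, mul_pow, Real.sq_sqrt hnn, sub_mul, one_mul, ← Real.exp_nat_mul, ← Real.exp_add]
    congr 2
    · rw [hA_def, ← Real.exp_add]
      congr 1
      push_cast
      rw [ht_def]
      field_simp
      try ring
    · rw [hB_def, ← Real.exp_add]
      congr 1
      push_cast
      rw [ht'_def]
      field_simp
      try ring
  -- sum identity
  have hsumA := (summable_gauss ht).mul_left A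
  have hsumB := (summable_gauss ht').mul_left B
  have hsum : (∑' k : ℤ, ck h q k ^ 2) =
      A * (∑' k : ℤ, Real.exp (-t * (k:ℝ) ^ 2)) - B * (∑' k : ℤ, Real.exp (-t' * (k:ℝ) ^ 2)) := by
    rw [tsum_congr hck, Summable.tsum_sub hsumA hsumB, tsum_mul_left, tsum_mul_left]
  have hs1 : Real.sqrt (Real.pi / (2 * h * q)) = Real.sqrt (Real.pi / t) := rfl
  have hs2 : Real.sqrt (Real.pi * (1 - h) / (2 * h * q)) = Real.sqrt (Real.pi / t') := by
    congr 1
    rw [ht'_def]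
    field_simp
    try ring
  set Θ : ℝ := ∑' k : ℤ, Real.exp (-(Real.pi ^ 2 / t) * (k:ℝ) ^ 2) with hΘ_def
  set Θ' : ℝ := ∑' k : ℤ, Real.exp (-(Real.pi ^ 2 / t') * (k:ℝ) ^ 2) with hΘ'_def
  have key : (∑' k : ℤ, ck h q k ^ 2) -
      A * Real.sqrt (Real.pi / (2 * h * q)) + B * Real.sqrt (Real.pi * (1 - h) / (2 * h * q)) =
      A * Real.sqrt (Real.pi / t) * (Θ - 1) - B * Real.sqrt (Real.pi / t') * (Θ' - 1) := by
    rw [hsum, poisson ht, poisson ht', hs1, hs2, ← hΘ_def, ← hΘ'_def]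
    ring
  rw [key]
  have hΘ1 : 1 ≤ Θ := theta_ge_one (by positivity)
  have hΘ'1 : 1 ≤ Θ' := theta_ge_one (by positivity)
  have hX : 0 ≤ A * Real.sqrt (Real.pi / t) * (Θ - 1) := by
    apply mul_nonneg (by positivity); linarith
  have hY : 0 ≤ B * Real.sqrt (Real.pi / t') * (Θ' - 1) := by
    apply mul_nonneg (by positivity); linarith
  have htri : |A * Real.sqrt (Real.pi / t) * (Θ - 1) - B * Real.sqrt (Real.pi / t') * (Θ' - 1)| ≤
      A * Real.sqrt (Real.pi / t) * (Θ - 1) + B * Real.sqrt (Real.pi / t') * (Θ' - 1) := by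
    rw [abs_sub_le_iff]; constructor <;> linarith [abs_nonneg (A * Real.sqrt (Real.pi / t) * (Θ - 1))]
  refine htri.trans ?_
  have hb1 : A * Real.sqrt (Real.pi / t) * (Θ - 1) ≤
      A * (K * Real.exp (-((Real.pi ^ 2 - ε) / t))) := by
    rw [mul_assoc]
    exact mul_le_mul_of_nonneg_left (hKb t ht ht1) (Real.exp_pos _).le
  have hb2 : B * Real.sqrt (Real.pi / t') * (Θ' - 1) ≤
      B * (K * Real.exp (-((Real.pi ^ 2 - ε) / t'))) := by
    rw [mul_assoc]
    exact mul_le_mul_of_nonneg_left (hKb t' ht' ht'1) (Real.exp_pos _).le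
  have hr1 : Real.exp (-(2 * h / q) - (Real.pi ^ 2 - ε) / (2 * h * q)) =
      A * Real.exp (-((Real.pi ^ 2 - ε) / t)) := by
    rw [hA_def, ← Real.exp_add]
    try congr 1
    try rw [ht_def]
    try ring
  have hr2 : Real.exp (-(2 * h / ((1 - h) * q)) - (Real.pi ^ 2 - ε) * (1 - h) / (2 * h * q)) =
      B * Real.exp (-((Real.pi ^ 2 - ε) / t')) := by
    rw [hB_def, ← Real.exp_add]
    congr 1
    rw [ht'_def]
    field_simp
    try ring
  rw [hr1, hr2]
  linarith [hb1, hb2]
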